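/- There exist constants R₀ > 0 with R₀ < √(3/(4π)) and C > 0 such that for every R with 0 < R < R₀ there exist functions m_R, ρ_R : [0,R] → ℝ, continuous on [0,R] and continuously differentiable on (0,R), with ρ_R monotone decreasing and m_R monotone increasing, solving the hard star ODE system on (0,R) with boundary conditions m_R(0) = 0 and ρ_R(R) = 1, and satisfying the bounds 1 ≤ ρ_R(r) ≤ 1 + C R² and 1 ≤ (3/(4π))·m_R(r)/r³ ≤ 1 + C R² for all r ∈ (0,R]. -/

import Mathlib

/-
Integrating the density equation inwards from the surface, a solution is a fixed point of
`ρ ↦ 1 + ∫ s in r..R, decayRate s (ρ s) (mass ρ s)`, where `mass ρ r = ∫ t in 0..r, 4πt²ρ t`.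
For `R ≤ 1/100` and densities with values in `[1, 2]` the mass is `O(r³)`, so the denominator
`r - 2m` stays above `r / 2`; hence the integrand is nonnegative, `O(r)` and `O(r)`-Lipschitz
in `ρ`. The map thus sends such densities into `[1, 1 + 168 R²] ⊆ [1, 2]` and is a contraction
for the sup norm, and Banach's fixed point theorem produces the solution. The bounds on the
mean density `3m / (4πr³)` are inherited from those on `ρ`.
-/

open Real Set MeasureTheory

lemma norm_integral_le_mul_sq {E : Type*} [NormedAddCommGroup E] [NormedSpace ℝ E] {f : ℝ → E}
    {c R K : ℝ} (hc : c ∈ Icc 0 R) (hK : 0 ≤ K) (h : ∀ s ∈ Ioc c R, ‖f s‖ ≤ K * s) :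
    ‖∫ s in c..R, f s‖ ≤ K * R ^ 2 := by
  have hR : 0 ≤ R := hc.1.trans hc.2
  have hle : ∀ s ∈ uIoc c R, ‖f s‖ ≤ K * R := fun s hs => by
    rw [uIoc_of_le hc.2] at hs
    exact (h s hs).trans (by gcongr; exact hs.2)
  calc ‖∫ s in c..R, f s‖ ≤ K * R * |R - c| :=
        intervalIntegral.norm_integral_le_of_norm_le_const hle
    _ ≤ K * R * R := by gcongr; rw [abs_of_nonneg (by linarith [hc.2])]; linarith [hc.1]
    _ = K * R ^ 2 := by ring

namespace HardStar

/-- The density equation of a hard star reads `ρ' = -decayRate r ρ m`. -/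
noncomputable def decayRate (r ρ m : ℝ) : ℝ :=
  (2 * ρ - 1) / (r - 2 * m) * (m / r + 4 * π * r ^ 2 * (ρ - 1))

section Pointwise

variable {r p q m n D : ℝ}

lemma half_le_sub_two_mul (hr : r ∈ Icc 0 (1 / 100)) (hm : m ≤ 8 * π / 3 * r ^ 3) :
    r / 2 ≤ r - 2 * m := by
  obtain ⟨hr0, hr1⟩ := hr
  have : r ^ 2 ≤ 1 / 10000 := by nlinarith
  nlinarith [pi_le_four, pow_nonneg hr0 3]

lemma decayRate_nonneg (hr : r ∈ Icc 0 (1 / 100)) (hp : 1 ≤ p)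
    (hm : m ∈ Icc 0 (8 * π / 3 * r ^ 3)) : 0 ≤ decayRate r p m := by
  have := half_le_sub_two_mul hr hm.2
  have : 0 ≤ p - 1 := by linarith
  exact mul_nonneg (div_nonneg (by linarith) (by linarith [hr.1]))
    (add_nonneg (div_nonneg hm.1 hr.1) (by positivity))

lemma abs_density_factor_le (hr : r ∈ Ioc 0 (1 / 100)) (hp : p ∈ Icc 1 2)
    (hm : m ≤ 8 * π / 3 * r ^ 3) : |(2 * p - 1) / (r - 2 * m)| ≤ 6 / r := by
  have hd := half_le_sub_two_mul (Ioc_subset_Icc_self hr) hm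
  rw [abs_of_nonneg (div_nonneg (by linarith [hp.1]) (by linarith [hr.1]))]
  calc (2 * p - 1) / (r - 2 * m) ≤ 3 / (r / 2) :=
        div_le_div₀ (by norm_num) (by linarith [hp.2]) (by linarith [hr.1]) hd
    _ = 6 / r := by field_simp; norm_num

lemma abs_mass_term_le (hr : r ∈ Ioc 0 (1 / 100)) (hp : p ∈ Icc 1 2)
    (hm : m ∈ Icc 0 (8 * π / 3 * r ^ 3)) :
    |m / r + 4 * π * r ^ 2 * (p - 1)| ≤ 28 * r ^ 2 := by
  obtain ⟨hr0, -⟩ := hr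
  have h1 : m / r ≤ 8 * π / 3 * r ^ 2 := by
    rw [div_le_iff₀ hr0]; linarith [hm.2]
  have h2 : 4 * π * r ^ 2 * (p - 1) ≤ 4 * π * r ^ 2 := by
    nlinarith [mul_nonneg (by positivity : (0:ℝ) ≤ 4 * π * r ^ 2) (sub_nonneg.2 hp.2)]
  have : 0 ≤ p - 1 := by linarith [hp.1]
  rw [abs_of_nonneg (add_nonneg (div_nonneg hm.1 hr0.le) (by positivity))]
  nlinarith [pi_le_four, sq_nonneg r]

lemma decayRate_le (hr : r ∈ Ioc 0 (1 / 100)) (hp : p ∈ Icc 1 2)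
    (hm : m ∈ Icc 0 (8 * π / 3 * r ^ 3)) : decayRate r p m ≤ 168 * r := by
  calc decayRate r p m ≤ |decayRate r p m| := le_abs_self _
    _ ≤ 6 / r * (28 * r ^ 2) := by
      rw [decayRate, abs_mul]
      exact mul_le_mul (abs_density_factor_le hr hp hm.2) (abs_mass_term_le hr hp hm)
        (abs_nonneg _) (div_nonneg (by norm_num) hr.1.le)
    _ = 168 * r := by field_simp; ring

lemma abs_density_factor_sub_le (hr : r ∈ Ioc 0 (1 / 100)) (hq : q ∈ Icc 1 2)
    (hm : m ∈ Icc 0 (8 * π / 3 * r ^ 3)) (hn : n ∈ Icc 0 (8 * π / 3 * r ^ 3))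
    (hpq : |p - q| ≤ D) (hmn : |m - n| ≤ 4 * π / 3 * r ^ 3 * D) :
    |(2 * p - 1) / (r - 2 * m) - (2 * q - 1) / (r - 2 * n)| ≤ 9 * D / r := by
  obtain ⟨hr0, hr1⟩ := hr
  have hD : 0 ≤ D := (abs_nonneg _).trans hpq
  have hdm := half_le_sub_two_mul ⟨hr0.le, hr1⟩ hm.2
  have hdn := half_le_sub_two_mul ⟨hr0.le, hr1⟩ hn.2
  have hnum : |(2 * p - 1) * (r - 2 * n) - (r - 2 * m) * (2 * q - 1)| ≤ 9 / 4 * r * D := by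
    have hπ : π * r ^ 2 ≤ 4 / 10000 := by nlinarith [pi_le_four, pi_pos]
    calc |(2 * p - 1) * (r - 2 * n) - (r - 2 * m) * (2 * q - 1)|
        = |2 * (p - q) * (r - 2 * n) + (2 * q - 1) * 2 * (m - n)| := by ring_nf
      _ ≤ |2 * (p - q) * (r - 2 * n)| + |(2 * q - 1) * 2 * (m - n)| := abs_add_le _ _
      _ ≤ 2 * D * r + 3 * 2 * (4 * π / 3 * r ^ 3 * D) := by
        simp only [abs_mul, abs_two]
        gcongr
        · rw [abs_of_nonneg (by linarith)]; linarith [hn.1]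
        · rw [abs_of_nonneg (by linarith [hq.1])]; linarith [hq.2]
      _ ≤ 9 / 4 * r * D := by
        nlinarith [mul_le_mul_of_nonneg_right hπ (mul_nonneg hr0.le hD)]
  have hden : r ^ 2 / 4 ≤ (r - 2 * m) * (r - 2 * n) := by nlinarith
  rw [div_sub_div _ _ (by linarith) (by linarith), abs_div,
    abs_of_nonneg (by nlinarith : 0 ≤ (r - 2 * m) * (r - 2 * n))]
  calc _ ≤ 9 / 4 * r * D / (r ^ 2 / 4) := div_le_div₀ (by positivity) hnum (by positivity) hden
    _ = 9 * D / r := by field_simp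

lemma abs_mass_term_sub_le (hr : r ∈ Ioc 0 (1 / 100)) (hpq : |p - q| ≤ D)
    (hmn : |m - n| ≤ 4 * π / 3 * r ^ 3 * D) :
    |m / r + 4 * π * r ^ 2 * (p - 1) - (n / r + 4 * π * r ^ 2 * (q - 1))| ≤
      22 * r ^ 2 * D := by
  obtain ⟨hr0, -⟩ := hr
  have hD : 0 ≤ D := (abs_nonneg _).trans hpq
  calc _ = |(m - n) / r + 4 * π * r ^ 2 * (p - q)| := by ring_nf
    _ ≤ |(m - n) / r| + |4 * π * r ^ 2 * (p - q)| := abs_add_le _ _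
    _ ≤ 4 * π / 3 * r ^ 3 * D / r + 4 * π * r ^ 2 * D := by
      rw [abs_div, abs_of_pos hr0, abs_mul, abs_of_nonneg (by positivity : 0 ≤ 4 * π * r ^ 2)]
      gcongr
    _ = 16 * π / 3 * r ^ 2 * D := by field_simp; ring
    _ ≤ 22 * r ^ 2 * D := by nlinarith [pi_le_four, mul_nonneg (sq_nonneg r) hD]

lemma abs_decayRate_sub_le (hr : r ∈ Ioc 0 (1 / 100)) (hp : p ∈ Icc 1 2) (hq : q ∈ Icc 1 2)
    (hm : m ∈ Icc 0 (8 * π / 3 * r ^ 3)) (hn : n ∈ Icc 0 (8 * π / 3 * r ^ 3))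
    (hpq : |p - q| ≤ D) (hmn : |m - n| ≤ 4 * π / 3 * r ^ 3 * D) :
    |decayRate r p m - decayRate r q n| ≤ 384 * r * D := by
  have hr0 := hr.1
  have hD : 0 ≤ D := (abs_nonneg _).trans hpq
  set a := (2 * p - 1) / (r - 2 * m)
  set b := (2 * q - 1) / (r - 2 * n)
  set c := m / r + 4 * π * r ^ 2 * (p - 1)
  set d := n / r + 4 * π * r ^ 2 * (q - 1)
  calc |a * c - b * d| = |(a - b) * d + a * (c - d)| := by ring_nf
    _ ≤ |a - b| * |d| + |a| * |c - d| := by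
      rw [← abs_mul, ← abs_mul]; exact abs_add_le _ _
    _ ≤ 9 * D / r * (28 * r ^ 2) + 6 / r * (22 * r ^ 2 * D) :=
      add_le_add
        (mul_le_mul (abs_density_factor_sub_le hr hq hm hn hpq hmn)
          (abs_mass_term_le hr hq hn) (abs_nonneg _) (by positivity))
        (mul_le_mul (abs_density_factor_le hr hp hm.2) (abs_mass_term_sub_le hr hpq hmn)
          (abs_nonneg _) (by positivity))
    _ = 384 * r * D := by field_simp; ring

end Pointwise

noncomputable def mass (ρ : ℝ → ℝ) (r : ℝ) : ℝ := ∫ t in (0:ℝ)..r, 4 * π * t ^ 2 * ρ t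

section Mass

variable {ρ σ : ℝ → ℝ} {a b s D : ℝ}

lemma hasDerivAt_mass (hρ : Continuous ρ) (r : ℝ) :
    HasDerivAt (mass ρ) (4 * π * r ^ 2 * ρ r) r := by
  have hf : Continuous fun t => 4 * π * t ^ 2 * ρ t := by fun_prop
  exact intervalIntegral.integral_hasDerivAt_right (hf.intervalIntegrable _ _)
    (hf.stronglyMeasurableAtFilter _ _) hf.continuousAt

lemma continuous_mass (hρ : Continuous ρ) : Continuous (mass ρ) :=
  continuous_iff_continuousAt.2 fun r => (hasDerivAt_mass hρ r).continuousAt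

lemma monotone_mass (hρ : Continuous ρ) (hρ0 : ∀ x, 0 ≤ ρ x) : Monotone (mass ρ) :=
  monotone_of_deriv_nonneg (fun r => (hasDerivAt_mass hρ r).differentiableAt) fun r => by
    rw [(hasDerivAt_mass hρ r).deriv]; have := hρ0 r; positivity

lemma mass_const (c s : ℝ) : mass (fun _ => c) s = 4 * π * c / 3 * s ^ 3 := by
  simp only [mass, intervalIntegral.integral_mul_const, intervalIntegral.integral_const_mul,
    integral_pow]
  ring

lemma mass_sub (hρ : Continuous ρ) (hσ : Continuous σ) (s : ℝ) :
    mass ρ s - mass σ s = mass (ρ - σ) s := by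
  have hf : Continuous fun t => 4 * π * t ^ 2 * ρ t := by fun_prop
  have hg : Continuous fun t => 4 * π * t ^ 2 * σ t := by fun_prop
  rw [mass, mass, ← intervalIntegral.integral_sub (hf.intervalIntegrable _ _)
    (hg.intervalIntegrable _ _)]
  simp only [mass, Pi.sub_apply, mul_sub]

lemma mass_mono (hρ : Continuous ρ) (hσ : Continuous σ) (h : ∀ x, ρ x ≤ σ x) (hs : 0 ≤ s) :
    mass ρ s ≤ mass σ s := by
  have hf : Continuous fun t => 4 * π * t ^ 2 * ρ t := by fun_prop
  have hg : Continuous fun t => 4 * π * t ^ 2 * σ t := by fun_prop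
  exact intervalIntegral.integral_mono_on hs (hf.intervalIntegrable _ _)
    (hg.intervalIntegrable _ _) fun x _ => by gcongr; exact h x

lemma mass_mem_Icc (hρ : Continuous ρ) (h : ∀ x, ρ x ∈ Icc a b) (hs : 0 ≤ s) :
    mass ρ s ∈ Icc (4 * π * a / 3 * s ^ 3) (4 * π * b / 3 * s ^ 3) :=
  ⟨mass_const a s ▸ mass_mono continuous_const hρ (fun x => (h x).1) hs,
    mass_const b s ▸ mass_mono hρ continuous_const (fun x => (h x).2) hs⟩

lemma mul_mass_div_cube_mem_Icc (hρ : Continuous ρ) (h : ∀ x, ρ x ∈ Icc a b) (hs : 0 < s) :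
    3 / (4 * π) * (mass ρ s / s ^ 3) ∈ Icc a b := by
  have hk : 0 < 4 * π / 3 * s ^ 3 := by positivity
  have hm := mass_mem_Icc hρ h hs.le
  rw [show 3 / (4 * π) * (mass ρ s / s ^ 3) = mass ρ s / (4 * π / 3 * s ^ 3) by field_simp]
  exact ⟨(le_div_iff₀ hk).2 (by linarith [hm.1]), (div_le_iff₀ hk).2 (by linarith [hm.2])⟩

lemma abs_mass_sub_le (hρ : Continuous ρ) (hσ : Continuous σ) (hD : ∀ x, |ρ x - σ x| ≤ D)
    (hs : 0 ≤ s) : |mass ρ s - mass σ s| ≤ 4 * π / 3 * s ^ 3 * D := by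
  have := mass_mem_Icc (hρ.sub hσ) (fun x => abs_le.1 (hD x)) hs
  rw [mass_sub hρ hσ, abs_le]
  constructor <;> linarith [this.1, this.2]

end Mass

def Admissible (ρ : ℝ → ℝ) : Prop := Continuous ρ ∧ ∀ x, ρ x ∈ Icc (1:ℝ) 2

/-- Clamping `r` to `[0, R]` makes the image a bounded continuous function on all of `ℝ`. -/
noncomputable def picardMap {R : ℝ} (hR : 0 ≤ R) (ρ : ℝ → ℝ) (r : ℝ) : ℝ :=
  1 + ∫ s in (projIcc 0 R hR r : ℝ)..R, decayRate s (ρ s) (mass ρ s)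

namespace Admissible

variable {ρ σ : ℝ → ℝ} {s R D : ℝ}

lemma mass_mem (hρ : Admissible ρ) (hs : 0 ≤ s) : mass ρ s ∈ Icc 0 (8 * π / 3 * s ^ 3) := by
  have := mass_mem_Icc hρ.1 hρ.2 hs
  exact ⟨le_trans (by positivity) this.1, by linarith [this.2]⟩

lemma decay_nonneg (hρ : Admissible ρ) (hs : s ∈ Icc 0 (1 / 100)) :
    0 ≤ decayRate s (ρ s) (mass ρ s) :=
  decayRate_nonneg hs (hρ.2 s).1 (hρ.mass_mem hs.1)

lemma decay_le (hρ : Admissible ρ) (hs : s ∈ Ioc 0 (1 / 100)) :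
    decayRate s (ρ s) (mass ρ s) ≤ 168 * s :=
  decayRate_le hs (hρ.2 s) (hρ.mass_mem hs.1.le)

lemma abs_decay_sub_le (hρ : Admissible ρ) (hσ : Admissible σ) (hD : ∀ x, |ρ x - σ x| ≤ D)
    (hs : s ∈ Ioc 0 (1 / 100)) :
    |decayRate s (ρ s) (mass ρ s) - decayRate s (σ s) (mass σ s)| ≤ 384 * s * D :=
  abs_decayRate_sub_le hs (hρ.2 s) (hσ.2 s) (hρ.mass_mem hs.1.le) (hσ.mass_mem hs.1.le) (hD s)
    (abs_mass_sub_le hρ.1 hσ.1 hD hs.1.le)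

lemma continuousOn_decay (hρ : Admissible ρ) :
    ContinuousOn (fun s => decayRate s (ρ s) (mass ρ s)) (Ioc 0 (1 / 100)) := by
  have hρc := hρ.1
  have hm := continuous_mass hρ.1
  refine ContinuousOn.mul (ContinuousOn.div (by fun_prop) (by fun_prop) fun s hs => ?_)
    (ContinuousOn.add (ContinuousOn.div (by fun_prop) (by fun_prop) fun s hs => hs.1.ne')
      (by fun_prop))
  linarith [half_le_sub_two_mul (Ioc_subset_Icc_self hs) (hρ.mass_mem hs.1.le).2, hs.1]

lemma integrableOn_decay (hρ : Admissible ρ) :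
    IntegrableOn (fun s => decayRate s (ρ s) (mass ρ s)) (Icc 0 (1 / 100)) := by
  have hρm := hρ.1.measurable
  have hm := (continuous_mass hρ.1).measurable
  rw [integrableOn_Icc_iff_integrableOn_Ioc]
  refine Measure.integrableOn_of_bounded (M := 168) measure_Ioc_lt_top.ne
    (by unfold decayRate; fun_prop : Measurable _).aestronglyMeasurable ?_
  refine (ae_restrict_iff' measurableSet_Ioc).2 (ae_of_all _ fun s hs => ?_)
  rw [Real.norm_eq_abs, abs_of_nonneg (hρ.decay_nonneg (Ioc_subset_Icc_self hs))]
  linarith [hρ.decay_le hs, hs.2]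

lemma intervalIntegrable_decay (hρ : Admissible ρ) (hR1 : R ≤ 1 / 100) {c : ℝ}
    (hc : c ∈ Icc 0 R) :
    IntervalIntegrable (fun s => decayRate s (ρ s) (mass ρ s)) volume c R :=
  (hρ.integrableOn_decay.mono_set (by
    rw [uIcc_of_le hc.2]; exact Icc_subset_Icc hc.1 hR1)).intervalIntegrable

variable (hR : 0 ≤ R)

lemma picardMap_mem_Icc (hρ : Admissible ρ) (hR1 : R ≤ 1 / 100) (r : ℝ) :
    picardMap hR ρ r ∈ Icc 1 (1 + 168 * R ^ 2) := by
  have hc := (projIcc 0 R hR r).2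
  have hnonneg := intervalIntegral.integral_nonneg (μ := volume) hc.2 fun s hs =>
    hρ.decay_nonneg ⟨hc.1.trans hs.1, hs.2.trans hR1⟩
  have hle := (Real.le_norm_self _).trans (norm_integral_le_mul_sq (K := 168) hc (by norm_num)
    fun s hs => by
      have hs1 : s ∈ Ioc 0 (1 / 100) := ⟨hc.1.trans_lt hs.1, hs.2.trans hR1⟩
      rw [Real.norm_eq_abs, abs_of_nonneg (hρ.decay_nonneg (Ioc_subset_Icc_self hs1))]
      exact hρ.decay_le hs1)
  exact ⟨le_add_of_nonneg_right hnonneg, add_le_add_right hle 1⟩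

lemma picardMap_mem_Icc_one_two (hρ : Admissible ρ) (hR1 : R ≤ 1 / 100) (r : ℝ) :
    picardMap hR ρ r ∈ Icc 1 2 := by
  have := hρ.picardMap_mem_Icc hR hR1 r
  exact ⟨this.1, by nlinarith [this.2]⟩

lemma abs_picardMap_sub_le (hρ : Admissible ρ) (hσ : Admissible σ) (hR1 : R ≤ 1 / 100)
    (hD : ∀ x, |ρ x - σ x| ≤ D) (r : ℝ) :
    |picardMap hR ρ r - picardMap hR σ r| ≤ 384 * D * R ^ 2 := by
  have hc := (projIcc 0 R hR r).2
  rw [picardMap, picardMap, add_sub_add_left_eq_sub, ← intervalIntegral.integral_sub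
    (hρ.intervalIntegrable_decay hR1 hc) (hσ.intervalIntegrable_decay hR1 hc),
    ← Real.norm_eq_abs]
  refine norm_integral_le_mul_sq hc (by linarith [(abs_nonneg _).trans (hD 0)]) fun s hs => ?_
  rw [Real.norm_eq_abs, mul_right_comm]
  exact hρ.abs_decay_sub_le hσ hD ⟨hc.1.trans_lt hs.1, hs.2.trans hR1⟩

lemma continuous_picardMap (hρ : Admissible ρ) (hR1 : R ≤ 1 / 100) :
    Continuous (picardMap hR ρ) := by
  have hint : IntegrableOn (fun s => decayRate s (ρ s) (mass ρ s)) (uIcc 0 R) :=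
    hρ.integrableOn_decay.mono_set (by rw [uIcc_of_le hR]; exact Icc_subset_Icc_right hR1)
  have hcont := continuousOn_const (c := (1:ℝ)).add
    (intervalIntegral.continuousOn_primitive_interval_left hint)
  rw [uIcc_of_le hR] at hcont
  exact hcont.comp_continuous (continuous_subtype_val.comp continuous_projIcc) fun r =>
    Subtype.prop _

lemma antitone_picardMap (hρ : Admissible ρ) (hR1 : R ≤ 1 / 100) :
    Antitone (picardMap hR ρ) := fun x y hxy => by
  have hx := (projIcc 0 R hR x).2
  have hy := (projIcc 0 R hR y).2
  refine add_le_add_right (intervalIntegral.integral_mono_interval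
    (monotone_projIcc hR hxy) hy.2 le_rfl ?_ (hρ.intervalIntegrable_decay hR1 hx)) 1
  refine (ae_restrict_iff' measurableSet_Ioc).2 (ae_of_all _ fun s hs => ?_)
  exact hρ.decay_nonneg ⟨hx.1.trans hs.1.le, hs.2.trans hR1⟩

lemma hasDerivAt_picardMap (hρ : Admissible ρ) (hR1 : R ≤ 1 / 100) {r : ℝ}
    (hr : r ∈ Ioo 0 R) : HasDerivAt (picardMap hR ρ) (-decayRate r (ρ r) (mass ρ r)) r := by
  have hr1 : r ∈ Ioo 0 (1 / 100) := ⟨hr.1, hr.2.trans_le hR1⟩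
  have hcont := hρ.continuousOn_decay.mono Ioo_subset_Ioc_self
  have hderiv := (intervalIntegral.integral_hasDerivAt_left
    (hρ.intervalIntegrable_decay hR1 (Ioo_subset_Icc_self hr))
    (hcont.stronglyMeasurableAtFilter isOpen_Ioo r hr1)
    (hcont.continuousAt (isOpen_Ioo.mem_nhds hr1))).const_add 1
  refine hderiv.congr_of_eventuallyEq ?_
  filter_upwards [isOpen_Ioo.mem_nhds hr] with x hx
  rw [picardMap, projIcc_of_mem hR (Ioo_subset_Icc_self hx)]

end Admissible

def admissibleBCF : Set (BoundedContinuousFunction ℝ ℝ) := {ρ | ∀ x, ρ x ∈ Icc 1 2}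

lemma isClosed_admissibleBCF : IsClosed admissibleBCF := by
  simp only [admissibleBCF, ofPred_forall]
  exact isClosed_iInter fun x => isClosed_Icc.preimage (continuous_eval_const x)

lemma admissible_coe (ρ : admissibleBCF) : Admissible ρ.1 := ⟨ρ.1.continuous, ρ.2⟩

section FixedPoint

variable {R : ℝ} (hR : 0 ≤ R)

noncomputable def picardMapBCF (hR1 : R ≤ 1 / 100) (ρ : admissibleBCF) : admissibleBCF :=
  have hmem := (admissible_coe ρ).picardMap_mem_Icc_one_two hR hR1
  ⟨.ofNormedAddCommGroup (picardMap hR ρ.1) ((admissible_coe ρ).continuous_picardMap hR hR1) 2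
    fun x => by
      rw [Real.norm_eq_abs, abs_le]; constructor <;> linarith [(hmem x).1, (hmem x).2],
    hmem⟩

lemma contractingWith_picardMapBCF (hR1 : R ≤ 1 / 100) :
    ContractingWith (1 / 2) (picardMapBCF hR hR1) := by
  refine ⟨by norm_num, LipschitzWith.of_dist_le_mul fun ρ σ => ?_⟩
  rw [Subtype.dist_eq, Subtype.dist_eq]
  refine (BoundedContinuousFunction.dist_le (by positivity)).2 fun x => ?_
  have hdist := (admissible_coe ρ).abs_picardMap_sub_le hR (admissible_coe σ) hR1
    (fun y => (Real.dist_eq _ _).symm.trans_le (BoundedContinuousFunction.dist_coe_le_dist y)) x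
  have hR2 : 384 * R ^ 2 ≤ 1 / 2 := by nlinarith
  rw [Real.dist_eq]
  refine hdist.trans ?_
  push_cast
  nlinarith [mul_le_mul_of_nonneg_right hR2 (dist_nonneg (x := ρ.1) (y := σ.1))]

theorem exists_admissible_picardMap_eq (hR1 : R ≤ 1 / 100) :
    ∃ ρ, Admissible ρ ∧ picardMap hR ρ = ρ := by
  have : Nonempty admissibleBCF := ⟨⟨.const ℝ 1, fun _ => ⟨le_rfl, one_le_two⟩⟩⟩
  have : CompleteSpace admissibleBCF := isClosed_admissibleBCF.completeSpace_coe
  have hfix := (contractingWith_picardMapBCF hR hR1).fixedPoint_isFixedPt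
  exact ⟨_, admissible_coe _, congrArg (fun ρ : admissibleBCF => ⇑ρ.1) hfix⟩

end FixedPoint

end HardStar

open HardStar

theorem stmt0 :
    ∃ R₀ > (0:ℝ), R₀ < Real.sqrt (3 / (4 * π)) ∧
    ∃ C > (0:ℝ), ∀ R : ℝ, 0 < R → R < R₀ →
      ∃ m ρ : ℝ → ℝ,
        ContinuousOn m (Icc 0 R) ∧ ContinuousOn ρ (Icc 0 R) ∧
        AntitoneOn ρ (Icc 0 R) ∧ MonotoneOn m (Icc 0 R) ∧
        m 0 = 0 ∧ ρ R = 1 ∧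
        (∀ r ∈ Ioo (0:ℝ) R,
          HasDerivAt m (4 * π * r ^ 2 * ρ r) r ∧
          HasDerivAt ρ (-((2 * ρ r - 1) / (r - 2 * m r)) *
            (m r / r + 4 * π * r ^ 2 * (ρ r - 1))) r) ∧
        ContinuousOn (fun r => 4 * π * r ^ 2 * ρ r) (Ioo 0 R) ∧
        ContinuousOn (fun r => -((2 * ρ r - 1) / (r - 2 * m r)) *
            (m r / r + 4 * π * r ^ 2 * (ρ r - 1))) (Ioo 0 R) ∧
        (∀ r ∈ Ioc (0:ℝ) R,
          1 ≤ ρ r ∧ ρ r ≤ 1 + C * R ^ 2 ∧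
          1 ≤ 3 / (4 * π) * (m r / r ^ 3) ∧
          3 / (4 * π) * (m r / r ^ 3) ≤ 1 + C * R ^ 2) := by
  refine ⟨1 / 100, by norm_num, ?_, 168, by norm_num, fun R hR0 hR => ?_⟩
  · rw [lt_sqrt (by norm_num), lt_div_iff₀ (by positivity)]
    nlinarith [pi_le_four]
  obtain ⟨ρ, hρ, hfix⟩ := exists_admissible_picardMap_eq hR0.le hR.le
  have hρc : Continuous ρ := hρ.1
  have hderiv : ∀ r ∈ Ioo 0 R, HasDerivAt ρ (-decayRate r (ρ r) (mass ρ r)) r := fun r hr => by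
    simpa only [hfix] using hρ.hasDerivAt_picardMap hR0.le hR.le hr
  have hbound : ∀ x, ρ x ∈ Icc 1 (1 + 168 * R ^ 2) := fun x => by
    simpa only [hfix] using hρ.picardMap_mem_Icc hR0.le hR.le x
  refine ⟨mass ρ, ρ, (continuous_mass hρ.1).continuousOn, hρ.1.continuousOn,
    by simpa only [hfix] using (hρ.antitone_picardMap hR0.le hR.le).antitoneOn _,
    (monotone_mass hρ.1 fun x => zero_le_one.trans (hρ.2 x).1).monotoneOn _,
    intervalIntegral.integral_same, ?_,
    fun r hr => ⟨hasDerivAt_mass hρ.1 r, by rw [neg_mul]; exact hderiv r hr⟩, by fun_prop, ?_,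
    fun r hr => ?_⟩
  · rw [← hfix, picardMap, projIcc_right]
    simp
  · simp only [neg_mul]
    exact (hρ.continuousOn_decay.mono (Ioo_subset_Ioc_self.trans (Ioc_subset_Ioc_right hR.le))).neg
  · have hmean := mul_mass_div_cube_mem_Icc hρ.1 hbound hr.1
    exact ⟨(hbound r).1, (hbound r).2, hmean.1, hmean.2⟩
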